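/- arXiv:1403.3442 — 2 statements merged into one kernel-verified Lean document; each statement's English description precedes it below -/
import Mathlib

section
/- Let Ω ⊂ ℝ³ be a bounded open set, and let ℂ, ℍ, 𝕃 be linear maps from ℝ^{3×3} to ℝ^{3×3} such that: ℂ and ℍ map symmetric matrices to symmetric matrices, are self-adjoint with respect to the Frobenius inner product, and satisfy c_m‖X‖² ≤ ⟨ℂ.X, X⟩ ≤ c_M‖X‖² and h_m‖X‖² ≤ ⟨ℍ.X, X⟩ ≤ h_M‖X‖² for all symmetric X with constants c_m, c_M, h_m, h_M > 0; and 𝕃 is self-adjoint and satisfies L_m‖X‖² ≤ ⟨𝕃.X, X⟩ ≤ L_M‖X‖² for all X ∈ ℝ^{3×3} with constants L_m, L_M > 0. Then there exists a constant C > 0 such that for every continuously differentiable vector field u : ℝ³ → ℝ³ and matrix field P : ℝ³ → ℝ^{3×3}, both with compact support contained in Ω: ∫_Ω ( ⟨ℂ.sym(∇u − P), sym(∇u − P)⟩ + ⟨ℍ.sym P, sym P⟩ + ⟨𝕃.Curl P, Curl P⟩ ) dx ≥ C · ( ∫_Ω ‖∇u‖² dx + ∫_Ω ‖P‖² dx +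 ∫_Ω ‖Curl P‖² dx ). -/
open MeasureTheory

noncomputable section

/-- Points of ℝ³. -/
abbrev R3 : Type := Fin 3 → ℝ
/-- 3×3 real matrices (as functions). -/
abbrev M3 : Type := Fin 3 → Fin 3 → ℝ

/-- Frobenius inner product ⟨X,Y⟩ = tr(X Yᵀ) = ∑ᵢⱼ Xᵢⱼ Yᵢⱼ. -/
def finner (X Y : M3) : ℝ := ∑ i, ∑ j, X i j * Y i j

/-- Squared Frobenius norm ‖X‖². -/
def fnormSq (X : M3) : ℝ := finner X X

/-- Matrix trace. -/
def trM (X : M3) : ℝ := ∑ i, X i i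

/-- Matrix transpose. -/
def transp (X : M3) : M3 := fun i j => X j i

/-- Symmetric part sym X = (X + Xᵀ)/2. -/
def symMat (X : M3) : M3 := fun i j => (X i j + X j i) / 2

/-- Skew-symmetric part skew X = (X − Xᵀ)/2. -/
def skeww (X : M3) : M3 := fun i j => (X i j - X j i) / 2

/-- 3×3 identity matrix. -/
def idM : M3 := fun i j => if i = j then 1 else 0

/-- Deviatoric (trace-free) part dev X = X − (tr X / 3)·𝟙. -/
def devv (X : M3) : M3 := fun i j => X i j - (trM X / 3) * idM i j

/-- X is a symmetric matrix. -/
def isSymmM (X : M3) : Prop := ∀ i j, X i j = X j i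

/-- Partial derivative ∂ⱼ f (x). -/
def pd (j : Fin 3) (f : R3 → ℝ) (x : R3) : ℝ := fderiv ℝ f x (Pi.single j 1)

/-- curl v = (∂₂v₃ − ∂₃v₂, ∂₃v₁ − ∂₁v₃, ∂₁v₂ − ∂₂v₁) (0-based indices). -/
def curlV (v : R3 → R3) (x : R3) : R3 :=
  ![pd 1 (fun y => v y 2) x - pd 2 (fun y => v y 1) x,
    pd 2 (fun y => v y 0) x - pd 0 (fun y => v y 2) x,
    pd 0 (fun y => v y 1) x - pd 1 (fun y => v y 0) x]

/-- Row-wise Curl of a matrix field: the i-th row of Curl P is curl of the i-th row of P. -/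
def CurlM (P : R3 → M3) (x : R3) : M3 := fun i => curlV (fun y => P y i) x

/-- Jacobian matrix (∇u)ᵢⱼ = ∂ⱼ uᵢ. -/
def jac (u : R3 → R3) (x : R3) : M3 := fun i j => pd j (fun y => u y i) x

/-!
Korn's first inequality `∫ ‖∇u‖² ≤ 2 ∫ ‖sym ∇u‖²` comes from integrating by parts twice,
`∫ ∂ⱼuᵢ ∂ᵢuⱼ = ∫ (div u)² ≥ 0`; since `u` is only `C¹`, the mixed second derivatives are
reached by mollification.

For `P`, `‖skew P‖² = 2 tr Cof P - 2 tr Cof (sym P)`, and `tr Cof P` is a divergence up to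
`x · div Cof P`; the latter is bilinear in `P` and `Curl P` and vanishes when `P` is a gradient
(Piola identity). Integrating, and using `|x| ≤ R` on the support, gives the incompatible Korn
inequality `∫ ‖P‖² ≤ 4 ∫ ‖sym P‖² + 16 R² ∫ ‖Curl P‖²`. Together with
`‖sym ∇u‖² ≤ 2 ‖sym (∇u - P)‖² + 2 ‖sym P‖²` this bounds the three norms by
`(8 + 16 R²)` times the three terms the energy controls from below.
-/

open Filter Topology
open scoped Convolution

section IntegrationByParts

variable {E : Type*} [NormedAddCommGroup E] [NormedSpace ℝ E] [FiniteDimensional ℝ E]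
  [MeasurableSpace E] [BorelSpace E] {f g : E → ℝ}

theorem integral_fderiv_apply_eq_zero {μ : Measure E} [μ.IsAddHaarMeasure]
    (hg : ContDiff ℝ 1 g) (hcg : HasCompactSupport g) (v : E) :
    ∫ x, fderiv ℝ g x v ∂μ = 0 := by
  have h := integral_mul_fderiv_eq_neg_fderiv_mul_of_integrable (μ := μ) (f := fun _ => (1 : ℝ))
    (g := g) (v := v) (by simp)
    (by simpa using ((hg.continuous_fderiv one_ne_zero).clm_apply
      continuous_const).integrable_of_hasCompactSupport (hcg.fderiv_apply (𝕜 := ℝ) v))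
    (by simpa using hg.continuous.integrable_of_hasCompactSupport hcg)
    (fun x _ => differentiableAt_const _) (fun x _ => hg.differentiable one_ne_zero x)
  simpa using h

theorem integral_fderiv_mul_fderiv_comm_of_contDiff_two {μ : Measure E} [μ.IsAddHaarMeasure]
    (hf : ContDiff ℝ 1 f) (hcf : HasCompactSupport f) (hg : ContDiff ℝ 2 g) (v w : E) :
    ∫ x, fderiv ℝ f x v * fderiv ℝ g x w ∂μ = ∫ x, fderiv ℝ f x w * fderiv ℝ g x v ∂μ := by
  have hg' : ContDiff ℝ 1 (fderiv ℝ g) := hg.fderiv_right le_rfl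
  have ibp : ∀ v w : E, ∫ x, fderiv ℝ f x v * fderiv ℝ g x w ∂μ
      = -∫ x, f x * fderiv ℝ (fderiv ℝ g) x v w ∂μ := by
    intro v w
    have hgw : ContDiff ℝ 1 (fun x => fderiv ℝ g x w) := hg'.clm_apply contDiff_const
    have hderiv : ∀ x, fderiv ℝ (fun x => fderiv ℝ g x w) x v
        = fderiv ℝ (fderiv ℝ g) x v w := fun x => by
      rw [fderiv_clm_apply (hg'.differentiable one_ne_zero x) (differentiableAt_const _)]
      simp
    have h := integral_mul_fderiv_eq_neg_fderiv_mul_of_integrable (μ := μ) (f := f)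
      (g := fun x => fderiv ℝ g x w) (v := v)
      ((((hf.continuous_fderiv one_ne_zero).clm_apply continuous_const).mul
        hgw.continuous).integrable_of_hasCompactSupport (hcf.fderiv_apply (𝕜 := ℝ) v).mul_right)
      ((hf.continuous.mul ((hgw.continuous_fderiv one_ne_zero).clm_apply
        continuous_const)).integrable_of_hasCompactSupport hcf.mul_right)
      ((hf.continuous.mul hgw.continuous).integrable_of_hasCompactSupport hcf.mul_right)
      (fun x _ => hf.differentiable one_ne_zero x) (fun x _ => hgw.differentiable one_ne_zero x)
    simp only [hderiv] at h
    linarith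
  have hsymm : ∀ x, fderiv ℝ (fderiv ℝ g) x v w = fderiv ℝ (fderiv ℝ g) x w v := fun x =>
    (hg.contDiffAt.isSymmSndFDerivAt (by simp)).eq v w
  simp only [ibp, hsymm]

theorem exists_contDiff_two_tendsto_fderiv (hg : ContDiff ℝ 1 g) (hcg : HasCompactSupport g) :
    ∃ G : ℕ → E → ℝ, (∀ n, ContDiff ℝ 2 (G n)) ∧ (∃ M, ∀ n x, ‖fderiv ℝ (G n) x‖ ≤ M) ∧
      ∀ x, Tendsto (fun n => fderiv ℝ (G n) x) atTop (𝓝 (fderiv ℝ g x)) := by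
  let μ : Measure E := Measure.addHaar
  let φ : ℕ → ContDiffBump (0 : E) := fun n =>
    ⟨((n : ℝ) + 1)⁻¹ / 2, ((n : ℝ) + 1)⁻¹, by positivity, half_lt_self (by positivity)⟩
  have hφ : Tendsto (fun n => (φ n).rOut) atTop (𝓝 0) :=
    tendsto_one_div_add_atTop_nhds_zero_nat.congr fun n => one_div _
  have hderiv : ∀ n x, fderiv ℝ ((φ n).normed μ ⋆[ContinuousLinearMap.lsmul ℝ ℝ, μ] g) x
      = ((φ n).normed μ ⋆[ContinuousLinearMap.lsmul ℝ ℝ, μ] fderiv ℝ g) x := fun n x =>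
    (hcg.hasFDerivAt_convolution_right (ContinuousLinearMap.lsmul ℝ ℝ)
      (φ n).integrable_normed.locallyIntegrable hg x).fderiv
  obtain ⟨M, hM⟩ := (hg.continuous_fderiv one_ne_zero).bounded_above_of_compact_support
    (hcg.fderiv (𝕜 := ℝ))
  refine ⟨fun n => (φ n).normed μ ⋆[ContinuousLinearMap.lsmul ℝ ℝ, μ] g, fun n => ?_,
    ⟨M, fun n x => ?_⟩, fun x => ?_⟩
  · exact (φ n).hasCompactSupport_normed.contDiff_convolution_left _ (φ n).contDiff_normed
      hg.continuous.locallyIntegrable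
  · rw [hderiv, convolution_def]
    calc _ ≤ ∫ t, ‖(φ n).normed μ t • fderiv ℝ g (x - t)‖ ∂μ := norm_integral_le_integral_norm _
      _ ≤ ∫ t, (φ n).normed μ t * M ∂μ := by
          refine integral_mono_of_nonneg (.of_forall fun t => norm_nonneg _)
            ((φ n).integrable_normed.mul_const M) (.of_forall fun t => ?_)
          simp only [norm_smul, Real.norm_of_nonneg ((φ n).nonneg_normed t)]
          exact mul_le_mul_of_nonneg_left (hM _) ((φ n).nonneg_normed t)
      _ = M := by rw [integral_mul_const, (φ n).integral_normed, one_mul]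
  · simp only [hderiv]
    exact ContDiffBump.convolution_tendsto_right_of_continuous hφ
      (hg.continuous_fderiv one_ne_zero) x

theorem integral_fderiv_mul_fderiv_comm {μ : Measure E} [μ.IsAddHaarMeasure]
    (hf : ContDiff ℝ 1 f) (hcf : HasCompactSupport f) (hg : ContDiff ℝ 1 g)
    (hcg : HasCompactSupport g) (v w : E) :
    ∫ x, fderiv ℝ f x v * fderiv ℝ g x w ∂μ = ∫ x, fderiv ℝ f x w * fderiv ℝ g x v ∂μ := by
  obtain ⟨G, hG, ⟨M, hM⟩, hlim⟩ := exists_contDiff_two_tendsto_fderiv hg hcg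
  have htendsto : ∀ v w : E, Tendsto (fun n => ∫ x, fderiv ℝ f x v * fderiv ℝ (G n) x w ∂μ)
      atTop (𝓝 (∫ x, fderiv ℝ f x v * fderiv ℝ g x w ∂μ)) := by
    intro v w
    have hf' : Continuous fun x => fderiv ℝ f x v :=
      (hf.continuous_fderiv one_ne_zero).clm_apply continuous_const
    refine tendsto_integral_of_dominated_convergence (fun x => ‖fderiv ℝ f x v‖ * (M * ‖w‖))
      (fun n => (hf'.mul (((hG n).continuous_fderiv two_ne_zero).clm_apply
        continuous_const)).aestronglyMeasurable)
      ((hf'.norm.integrable_of_hasCompactSupport (hcf.fderiv_apply (𝕜 := ℝ) v).norm).mul_const _)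
      (fun n => .of_forall fun x => ?_)
      (.of_forall fun x => (((ContinuousLinearMap.apply ℝ ℝ w).continuous.tendsto _).comp
        (hlim x)).const_mul _)
    rw [norm_mul]
    gcongr
    exact ((fderiv ℝ (G n) x).le_opNorm w).trans (by gcongr; exact hM n x)
  exact tendsto_nhds_unique ((htendsto v w).congr fun n =>
    integral_fderiv_mul_fderiv_comm_of_contDiff_two hf hcf (hG n) v w) (htendsto w v)

end IntegrationByParts

section PartialDerivatives

variable {f g : R3 → ℝ} {x : R3}

theorem pd_eq_zero_of_notMem_tsupport (hx : x ∉ tsupport f) (j : Fin 3) : pd j f x = 0 := by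
  simp [pd, fderiv_of_notMem_tsupport ℝ hx]

theorem continuous_pd (hf : ContDiff ℝ 1 f) (j : Fin 3) : Continuous (pd j f) :=
  (hf.continuous_fderiv one_ne_zero).clm_apply continuous_const

theorem HasCompactSupport.pd (hf : HasCompactSupport f) (j : Fin 3) :
    HasCompactSupport (pd j f) :=
  hf.fderiv_apply (𝕜 := ℝ) _

theorem pd_mul (hf : DifferentiableAt ℝ f x) (hg : DifferentiableAt ℝ g x) (j : Fin 3) :
    pd j (fun y => f y * g y) x = pd j f x * g x + f x * pd j g x := by
  simp only [pd, fderiv_fun_mul hf hg, add_apply, smul_apply, smul_eq_mul]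
  ring

theorem pd_sub (hf : DifferentiableAt ℝ f x) (hg : DifferentiableAt ℝ g x) (j : Fin 3) :
    pd j (fun y => f y - g y) x = pd j f x - pd j g x := by
  simp [pd, fderiv_fun_sub hf hg]

theorem pd_apply (a j : Fin 3) : pd j (fun y : R3 => y a) x = (Pi.single j 1 : R3) a := by
  simp [pd, (hasFDerivAt_apply a x).fderiv]

theorem integrable_pd (hf : ContDiff ℝ 1 f) (hcf : HasCompactSupport f) (j : Fin 3) :
    Integrable (pd j f) :=
  (continuous_pd hf j).integrable_of_hasCompactSupport (hcf.pd j)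

theorem integral_pd_eq_zero (hf : ContDiff ℝ 1 f) (hcf : HasCompactSupport f) (j : Fin 3) :
    ∫ x, pd j f x = 0 :=
  integral_fderiv_apply_eq_zero hf hcf _

end PartialDerivatives

section MatrixAlgebra

@[simp] theorem symMat_zero : symMat 0 = 0 := by ext; simp [symMat]

@[simp] theorem skeww_zero : skeww 0 = 0 := by ext; simp [skeww]

theorem isSymmM_symMat (X : M3) : isSymmM (symMat X) := fun i j => by
  simp only [symMat, add_comm]

theorem fnormSq_nonneg (X : M3) : 0 ≤ fnormSq X := by
  unfold fnormSq finner
  exact Finset.sum_nonneg fun i _ => Finset.sum_nonneg fun j _ => mul_self_nonneg (X i j)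

theorem fnormSq_add_le (A B : M3) : fnormSq (A + B) ≤ 2 * fnormSq A + 2 * fnormSq B := by
  simp only [fnormSq, finner, Finset.mul_sum, ← Finset.sum_add_distrib, Pi.add_apply]
  gcongr with i _ j _
  nlinarith [sq_nonneg (A i j - B i j)]

theorem fnormSq_symMat_le (X Y : M3) :
    fnormSq (symMat X) ≤ 2 * fnormSq (symMat (X - Y)) + 2 * fnormSq (symMat Y) := by
  have h : symMat X = symMat (X - Y) + symMat Y := by
    ext i j
    simp only [symMat, Pi.add_apply, Pi.sub_apply]
    ring
  exact h ▸ fnormSq_add_le _ _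

theorem fnormSq_eq_symMat_add_skeww (X : M3) :
    fnormSq X = fnormSq (symMat X) + fnormSq (skeww X) := by
  simp only [fnormSq, finner, symMat, skeww, Fin.sum_univ_three]
  ring

theorem two_mul_fnormSq_symMat (X : M3) :
    2 * fnormSq (symMat X) = fnormSq X + ∑ i, ∑ j, X i j * X j i := by
  simp only [fnormSq, finner, symMat, Fin.sum_univ_three]
  ring

theorem trM_sq (X : M3) : trM X ^ 2 = ∑ i, ∑ j, X i i * X j j := by
  rw [trM, sq, Finset.sum_mul_sum]

@[fun_prop] theorem continuous_symMat : Continuous symMat := by unfold symMat; fun_prop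

@[fun_prop] theorem continuous_skeww : Continuous skeww := by unfold skeww; fun_prop

@[fun_prop] theorem Continuous.finner {α : Type*} [TopologicalSpace α] {F G : α → M3}
    (hF : Continuous F) (hG : Continuous G) : Continuous fun x => finner (F x) (G x) := by
  unfold _root_.finner; fun_prop

theorem integrable_finner_map {F : R3 → M3} (hF : Continuous F) (hcF : HasCompactSupport F)
    (L : M3 →ₗ[ℝ] M3) : Integrable fun x => finner (L (F x)) (F x) := by
  have := L.continuous_of_finiteDimensional
  exact (by fun_prop : Continuous _).integrable_of_hasCompactSupport
    (hcF.comp_left (g := fun X => finner (L X) X) (by simp [finner]))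

theorem integrable_fnormSq {F : R3 → M3} (hF : Continuous F) (hcF : HasCompactSupport F) :
    Integrable fun x => fnormSq (F x) :=
  integrable_finner_map hF hcF LinearMap.id

end MatrixAlgebra

section Fields

variable {u : R3 → R3} {P : R3 → M3} {x : R3}

theorem jac_eq_zero_of_notMem_tsupport (hx : x ∉ tsupport u) : jac u x = 0 := by
  ext i j
  exact pd_eq_zero_of_notMem_tsupport
    (fun h => hx (tsupport_comp_subset (g := fun v : R3 => v i) rfl _ h)) j

theorem CurlM_eq_zero_of_notMem_tsupport (hx : x ∉ tsupport P) : CurlM P x = 0 := by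
  have h : ∀ c d b, pd b (fun y => P y c d) x = 0 := fun c d =>
    pd_eq_zero_of_notMem_tsupport
      fun h => hx (tsupport_comp_subset (g := fun X : M3 => X c d) rfl _ h)
  ext c k
  fin_cases k <;> simp [CurlM, curlV, h]

theorem continuous_jac (hu : ContDiff ℝ 1 u) : Continuous (jac u) :=
  continuous_pi fun i => continuous_pi fun j => continuous_pd (by fun_prop) j

theorem continuous_CurlM (hP : ContDiff ℝ 1 P) : Continuous (CurlM P) := by
  have h : ∀ c d b, Continuous (pd b (fun y => P y c d)) := fun c d =>
    continuous_pd (by fun_prop)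
  refine continuous_pi fun c => continuous_pi fun k => ?_
  fin_cases k <;> simp only [CurlM, curlV] <;> fun_prop

theorem HasCompactSupport.jac (hu : HasCompactSupport u) : HasCompactSupport (jac u) :=
  .intro hu fun _ hx => jac_eq_zero_of_notMem_tsupport hx

theorem HasCompactSupport.CurlM (hP : HasCompactSupport P) : HasCompactSupport (CurlM P) :=
  .intro hP fun _ hx => CurlM_eq_zero_of_notMem_tsupport hx

end Fields

theorem integral_fnormSq_jac_le_two_mul_symMat {u : R3 → R3} (hu : ContDiff ℝ 1 u)
    (hcu : HasCompactSupport u) :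
    ∫ x, fnormSq (jac u x) ≤ 2 * ∫ x, fnormSq (symMat (jac u x)) := by
  have hcomp : ∀ i, HasCompactSupport fun y => u y i := fun i =>
    hcu.comp_left (g := fun v : R3 => v i) rfl
  have hJ : ∀ i j, Continuous fun x => jac u x i j := fun i j => by
    have := continuous_jac hu; fun_prop
  have hint : ∀ i j k l, Integrable fun x => jac u x i j * jac u x k l := fun i j k l =>
    ((hJ i j).mul (hJ k l)).integrable_of_hasCompactSupport ((hcomp i).pd j).mul_right
  have hcomm : ∀ i j, ∫ x, jac u x i j * jac u x j i = ∫ x, jac u x i i * jac u x j j :=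
    fun i j => integral_fderiv_mul_fderiv_comm (f := fun y => u y i) (g := fun y => u y j)
      (by fun_prop) (hcomp i) (by fun_prop) (hcomp j) _ _
  have hsum : ∀ F : Fin 3 → Fin 3 → R3 → ℝ, (∀ i j, Integrable (F i j)) →
      ∫ x, ∑ i, ∑ j, F i j x = ∑ i, ∑ j, ∫ x, F i j x := fun F hF => by
    rw [integral_finsetSum _ fun i _ => integrable_finsetSum _ fun j _ => hF i j]
    exact Finset.sum_congr rfl fun i _ => integral_finsetSum _ fun j _ => hF i j
  have hfnormSq : Integrable fun x => fnormSq (jac u x) := by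
    unfold fnormSq finner
    exact integrable_finsetSum _ fun i _ => integrable_finsetSum _ fun j _ => hint i j i j
  calc ∫ x, fnormSq (jac u x)
      ≤ (∫ x, fnormSq (jac u x)) + ∫ x, trM (jac u x) ^ 2 :=
        le_add_of_nonneg_right (integral_nonneg fun x => sq_nonneg _)
    _ = (∫ x, fnormSq (jac u x)) + ∑ i, ∑ j, ∫ x, jac u x i j * jac u x j i := by
        simp only [trM_sq, hcomm, hsum _ fun i j => hint i i j j]
    _ = 2 * ∫ x, fnormSq (symMat (jac u x)) := by
        simp only [← integral_const_mul, two_mul_fnormSq_symMat]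
        rw [integral_add hfnormSq, hsum _ fun i j => hint i j j i]
        exact integrable_finsetSum _ fun i _ => integrable_finsetSum _ fun j _ => hint i j j i

section Cofactor

/-- The cofactor matrix `(adjugate X)ᵀ`, with indices read modulo 3. -/
def cof (X : M3) : M3 := fun a b =>
  X (a + 1) (b + 1) * X (a + 2) (b + 2) - X (a + 1) (b + 2) * X (a + 2) (b + 1)

/-- `piolaDefect P (Curl P) = div Cof P`, which vanishes when `P` is a gradient. -/
def piolaDefect (X T : M3) : R3 := fun a =>
  ∑ d, (X (a + 2) d * T (a + 1) d - X (a + 1) d * T (a + 2) d)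

theorem fnormSq_skeww_eq (X : M3) :
    fnormSq (skeww X) = 2 * trM (cof X) - 2 * trM (cof (symMat X)) := by
  simp only [fnormSq, finner, skeww, trM, cof, symMat, Fin.sum_univ_three, Fin.reduceAdd]
  ring

theorem neg_two_mul_trM_cof_le (X : M3) : -(2 * trM (cof X)) ≤ fnormSq X := by
  simp only [fnormSq, finner, trM, cof, Fin.sum_univ_three, Fin.reduceAdd]
  nlinarith [sq_nonneg (X 0 0 + X 1 1 + X 2 2), sq_nonneg (X 0 1 - X 1 0),
    sq_nonneg (X 0 2 - X 2 0), sq_nonneg (X 1 2 - X 2 1)]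

theorem sum_pd_cof {P : R3 → M3} (hP : Differentiable ℝ P) (x : R3) (a : Fin 3) :
    ∑ b, pd b (fun y => cof (P y) a b) x = piolaDefect (P x) (CurlM P x) a := by
  simp (disch := fun_prop) only [cof, Fin.sum_univ_three, pd_sub, pd_mul]
  fin_cases a <;>
    simp only [Fin.isValue, Fin.zero_eta, Fin.mk_one, Fin.reduceFinMk, Fin.reduceAdd, zero_add,
      piolaDefect, CurlM, curlV, Fin.sum_univ_three, Matrix.cons_val_zero, Matrix.cons_val_one,
      Matrix.cons_val] <;>
    ring

theorem sum_sum_pd_mul_cof {P : R3 → M3} (hP : Differentiable ℝ P) (x : R3) :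
    ∑ a, ∑ b, pd b (fun y => y a * cof (P y) a b) x
      = trM (cof (P x)) + x ⬝ᵥ piolaDefect (P x) (CurlM P x) := by
  have hcof : ∀ a b, DifferentiableAt ℝ (fun y => cof (P y) a b) x := fun a b => by
    unfold cof; fun_prop
  simp (disch := fun_prop) only [pd_mul, pd_apply, Finset.sum_add_distrib, ← Finset.mul_sum,
    sum_pd_cof hP]
  simp [trM, dotProduct, Pi.single_apply]

theorem abs_mul_mul_le {s p t R : ℝ} (hs : |s| ≤ R) :
    2 * |s * p * t| ≤ p ^ 2 / 4 + 4 * R ^ 2 * t ^ 2 := by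
  have hR : 0 ≤ R := (abs_nonneg s).trans hs
  rw [abs_mul, abs_mul]
  nlinarith [sq_nonneg (|p| / 2 - 2 * R * |t|), sq_abs p, sq_abs t, abs_nonneg p, abs_nonneg t,
    mul_le_mul_of_nonneg_right hs (mul_nonneg (abs_nonneg p) (abs_nonneg t))]

theorem neg_two_mul_dotProduct_piolaDefect_le {x : R3} {R : ℝ} (hx : ∀ a, |x a| ≤ R)
    (X T : M3) : -(2 * (x ⬝ᵥ piolaDefect X T)) ≤ fnormSq X / 2 + 8 * R ^ 2 * fnormSq T := by
  calc -(2 * (x ⬝ᵥ piolaDefect X T))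
      ≤ ∑ a, ∑ d, ((X (a + 2) d ^ 2 / 4 + 4 * R ^ 2 * T (a + 1) d ^ 2)
          + (X (a + 1) d ^ 2 / 4 + 4 * R ^ 2 * T (a + 2) d ^ 2)) := by
        simp only [dotProduct, piolaDefect, Finset.mul_sum, ← Finset.sum_neg_distrib]
        gcongr with a _ d _
        have h1 := abs_mul_mul_le (p := X (a + 2) d) (t := T (a + 1) d) (hx a)
        have h2 := abs_mul_mul_le (p := X (a + 1) d) (t := T (a + 2) d) (hx a)
        have h3 := neg_abs_le (x a * X (a + 2) d * T (a + 1) d)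
        have h4 := le_abs_self (x a * X (a + 1) d * T (a + 2) d)
        nlinarith
    _ = fnormSq X / 2 + 8 * R ^ 2 * fnormSq T := by
        simp only [fnormSq, finner, Fin.sum_univ_three, Fin.reduceAdd]
        ring

theorem abs_apply_le_of_mem_closedBall {x : R3} {R : ℝ} (hx : x ∈ Metric.closedBall 0 R)
    (a : Fin 3) : |x a| ≤ R :=
  (norm_le_pi_norm x a).trans (mem_closedBall_zero_iff.mp hx)

theorem fnormSq_skeww_le {P : R3 → M3} (hP : Differentiable ℝ P) {R : ℝ}
    (hR : tsupport P ⊆ Metric.closedBall 0 R) (x : R3) :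
    fnormSq (skeww (P x)) ≤ 2 * ∑ a, ∑ b, pd b (fun y => y a * cof (P y) a b) x
      + (fnormSq (symMat (P x)) + fnormSq (P x) / 2 + 8 * R ^ 2 * fnormSq (CurlM P x)) := by
  have hcross : -(2 * (x ⬝ᵥ piolaDefect (P x) (CurlM P x)))
      ≤ fnormSq (P x) / 2 + 8 * R ^ 2 * fnormSq (CurlM P x) := by
    by_cases hx : x ∈ tsupport P
    · exact neg_two_mul_dotProduct_piolaDefect_le (abs_apply_le_of_mem_closedBall (hR hx)) _ _
    · simp [image_eq_zero_of_notMem_tsupport hx, CurlM_eq_zero_of_notMem_tsupport hx,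
        dotProduct, piolaDefect, fnormSq, finner]
  have := sum_sum_pd_mul_cof hP x
  have := neg_two_mul_trM_cof_le (symMat (P x))
  rw [fnormSq_skeww_eq]
  linarith

theorem integral_fnormSq_le_symMat_add_CurlM {P : R3 → M3} (hP : ContDiff ℝ 1 P)
    (hcP : HasCompactSupport P) {R : ℝ} (hR : tsupport P ⊆ Metric.closedBall 0 R) :
    ∫ x, fnormSq (P x)
      ≤ 4 * (∫ x, fnormSq (symMat (P x))) + 16 * R ^ 2 * ∫ x, fnormSq (CurlM P x) := by
  have hterm : ∀ a b, ContDiff ℝ 1 (fun y => y a * cof (P y) a b) ∧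
      HasCompactSupport (fun y => y a * cof (P y) a b) := fun a b =>
    ⟨by unfold cof; fun_prop,
      (hcP.comp_left (g := fun X : M3 => cof X a b) (by simp [cof])).mul_left⟩
  have hint : ∀ a b, Integrable (pd b (fun y => y a * cof (P y) a b)) := fun a b =>
    integrable_pd (hterm a b).1 (hterm a b).2 b
  have hD : Integrable fun x => ∑ a, ∑ b, pd b (fun y => y a * cof (P y) a b) x :=
    integrable_finsetSum _ fun a _ => integrable_finsetSum _ fun b _ => hint a b
  have hD0 : ∫ x, ∑ a, ∑ b, pd b (fun y => y a * cof (P y) a b) x = 0 := by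
    rw [integral_finsetSum _ fun a _ => integrable_finsetSum _ fun b _ => hint a b]
    refine Finset.sum_eq_zero fun a _ => ?_
    rw [integral_finsetSum _ fun b _ => hint a b]
    exact Finset.sum_eq_zero fun b _ => integral_pd_eq_zero (hterm a b).1 (hterm a b).2 b
  have iP := integrable_fnormSq hP.continuous hcP
  have iS := integrable_fnormSq (F := fun x => symMat (P x)) (by fun_prop)
    (hcP.comp_left symMat_zero)
  have iA := integrable_fnormSq (F := fun x => skeww (P x)) (by fun_prop)
    (hcP.comp_left skeww_zero)
  have iC := integrable_fnormSq (continuous_CurlM hP) hcP.CurlM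
  have iSP : Integrable fun x => fnormSq (symMat (P x)) + fnormSq (P x) / 2 :=
    iS.add (iP.div_const 2)
  have iB : Integrable fun x =>
      fnormSq (symMat (P x)) + fnormSq (P x) / 2 + 8 * R ^ 2 * fnormSq (CurlM P x) :=
    iSP.add (iC.const_mul _)
  have hskeww : ∫ x, fnormSq (skeww (P x)) ≤ (∫ x, fnormSq (symMat (P x)))
      + (∫ x, fnormSq (P x)) / 2 + 8 * R ^ 2 * ∫ x, fnormSq (CurlM P x) :=
    calc ∫ x, fnormSq (skeww (P x))
        ≤ ∫ x, (2 * ∑ a, ∑ b, pd b (fun y => y a * cof (P y) a b) x + (fnormSq (symMat (P x))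
            + fnormSq (P x) / 2 + 8 * R ^ 2 * fnormSq (CurlM P x))) :=
          integral_mono iA ((hD.const_mul 2).add iB)
            (fnormSq_skeww_le (hP.differentiable one_ne_zero) hR)
      _ = _ := by
          rw [integral_add (hD.const_mul 2) iB, integral_const_mul, hD0,
            integral_add iSP (iC.const_mul _), integral_add iS (iP.div_const 2),
            integral_const_mul, integral_div]
          ring
  have hsplit : ∫ x, fnormSq (P x)
      = (∫ x, fnormSq (symMat (P x))) + ∫ x, fnormSq (skeww (P x)) := by
    rw [← integral_add iS iA]
    exact integral_congr_ae (.of_forall fun x => fnormSq_eq_symMat_add_skeww (P x))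
  linarith

end Cofactor

theorem integral_fnormSq_jac_P_CurlM_le {u : R3 → R3} {P : R3 → M3} (hu : ContDiff ℝ 1 u)
    (hcu : HasCompactSupport u) (hP : ContDiff ℝ 1 P) (hcP : HasCompactSupport P) {R : ℝ}
    (hR : tsupport P ⊆ Metric.closedBall 0 R) :
    (∫ x, fnormSq (jac u x)) + (∫ x, fnormSq (P x)) + ∫ x, fnormSq (CurlM P x)
      ≤ (8 + 16 * R ^ 2) * ((∫ x, fnormSq (symMat (jac u x - P x)))
        + (∫ x, fnormSq (symMat (P x))) + ∫ x, fnormSq (CurlM P x)) := by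
  have hJ := continuous_jac hu
  have iE := integrable_fnormSq (F := fun x => symMat (jac u x - P x)) (by fun_prop)
    ((hcu.jac.sub hcP).comp_left symMat_zero)
  have iS := integrable_fnormSq (F := fun x => symMat (P x)) (by fun_prop)
    (hcP.comp_left symMat_zero)
  have hsym : ∫ x, fnormSq (symMat (jac u x))
      ≤ 2 * (∫ x, fnormSq (symMat (jac u x - P x))) + 2 * ∫ x, fnormSq (symMat (P x)) := by
    rw [← integral_const_mul, ← integral_const_mul,
      ← integral_add (iE.const_mul 2) (iS.const_mul 2)]
    exact integral_mono (integrable_fnormSq (F := fun x => symMat (jac u x)) (by fun_prop)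
      (hcu.jac.comp_left symMat_zero)) ((iE.const_mul 2).add (iS.const_mul 2))
      fun x => fnormSq_symMat_le _ (P x)
  have hkorn := integral_fnormSq_jac_le_two_mul_symMat hu hcu
  have hincompatible := integral_fnormSq_le_symMat_add_CurlM hP hcP hR
  have ha : 0 ≤ ∫ x, fnormSq (symMat (jac u x - P x)) :=
    integral_nonneg fun x => fnormSq_nonneg _
  have hb : 0 ≤ ∫ x, fnormSq (symMat (P x)) := integral_nonneg fun x => fnormSq_nonneg _
  have hc : 0 ≤ ∫ x, fnormSq (CurlM P x) := integral_nonneg fun x => fnormSq_nonneg _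
  nlinarith [mul_nonneg (sq_nonneg R) ha, mul_nonneg (sq_nonneg R) hb]

def energyDensity (CC HH LL : M3 →ₗ[ℝ] M3) (u : R3 → R3) (P : R3 → M3) (x : R3) : ℝ :=
  finner (CC (symMat (jac u x - P x))) (symMat (jac u x - P x))
    + finner (HH (symMat (P x))) (symMat (P x)) + finner (LL (CurlM P x)) (CurlM P x)

theorem integral_energyDensity_ge {u : R3 → R3} {P : R3 → M3} (hu : ContDiff ℝ 1 u)
    (hcu : HasCompactSupport u) (hP : ContDiff ℝ 1 P) (hcP : HasCompactSupport P)
    (CC HH LL : M3 →ₗ[ℝ] M3) {cm hm Lm : ℝ}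
    (hC : ∀ X : M3, isSymmM X → cm * fnormSq X ≤ finner (CC X) X)
    (hH : ∀ X : M3, isSymmM X → hm * fnormSq X ≤ finner (HH X) X)
    (hL : ∀ X : M3, Lm * fnormSq X ≤ finner (LL X) X) :
    min cm (min hm Lm) * ((∫ x, fnormSq (symMat (jac u x - P x)))
        + (∫ x, fnormSq (symMat (P x))) + ∫ x, fnormSq (CurlM P x))
      ≤ ∫ x, energyDensity CC HH LL u P x := by
  have hJ := continuous_jac hu
  have hPc := hP.continuous
  have hCurl := continuous_CurlM hP
  have csE : HasCompactSupport fun x => symMat (jac u x - P x) :=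
    (hcu.jac.sub hcP).comp_left symMat_zero
  have csS : HasCompactSupport fun x => symMat (P x) := hcP.comp_left symMat_zero
  have iE := integrable_fnormSq (by fun_prop) csE
  have iS := integrable_fnormSq (by fun_prop) csS
  have iC := integrable_fnormSq hCurl hcP.CurlM
  have iES : Integrable fun x => fnormSq (symMat (jac u x - P x)) + fnormSq (symMat (P x)) :=
    iE.add iS
  have iW : Integrable (energyDensity CC HH LL u P) :=
    ((integrable_finner_map (by fun_prop) csE CC).add
      (integrable_finner_map (by fun_prop) csS HH)).add (integrable_finner_map hCurl hcP.CurlM LL)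
  have hpointwise : ∀ x, min cm (min hm Lm) * (fnormSq (symMat (jac u x - P x))
      + fnormSq (symMat (P x)) + fnormSq (CurlM P x)) ≤ energyDensity CC HH LL u P x := by
    intro x
    have := hC _ (isSymmM_symMat (jac u x - P x))
    have := hH _ (isSymmM_symMat (P x))
    have := hL (CurlM P x)
    have := fnormSq_nonneg (symMat (jac u x - P x))
    have := fnormSq_nonneg (symMat (P x))
    have := fnormSq_nonneg (CurlM P x)
    have := min_le_left cm (min hm Lm)
    have := (min_le_right cm (min hm Lm)).trans (min_le_left hm Lm)
    have := (min_le_right cm (min hm Lm)).trans (min_le_right hm Lm)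
    unfold energyDensity
    nlinarith
  rw [← integral_add iE iS, ← integral_add iES iC, ← integral_const_mul]
  exact integral_mono ((iES.add iC).const_mul _) iW hpointwise

theorem stmt_7_general (Ω : Set R3) (hΩb : Bornology.IsBounded Ω)
    (CC HH LL : M3 →ₗ[ℝ] M3)
    (cm cM hm hM Lm LM : ℝ)
    (hcm : 0 < cm) (hhm : 0 < hm) (hLm : 0 < Lm)
    (hC : ∀ X : M3, isSymmM X →
      cm * fnormSq X ≤ finner (CC X) X ∧ finner (CC X) X ≤ cM * fnormSq X)
    (hH : ∀ X : M3, isSymmM X →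
      hm * fnormSq X ≤ finner (HH X) X ∧ finner (HH X) X ≤ hM * fnormSq X)
    (hL : ∀ X : M3, Lm * fnormSq X ≤ finner (LL X) X ∧ finner (LL X) X ≤ LM * fnormSq X) :
    ∃ C : ℝ, 0 < C ∧ ∀ (u : R3 → R3) (P : R3 → M3),
      ContDiff ℝ 1 u → HasCompactSupport u → tsupport u ⊆ Ω →
      ContDiff ℝ 1 P → HasCompactSupport P → tsupport P ⊆ Ω →
      C * ((∫ x in Ω, fnormSq (jac u x)) + (∫ x in Ω, fnormSq (P x)) +
            ∫ x in Ω, fnormSq (CurlM P x)) ≤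
        ∫ x in Ω, (finner (CC (symMat (jac u x - P x))) (symMat (jac u x - P x))
          + finner (HH (symMat (P x))) (symMat (P x))
          + finner (LL (CurlM P x)) (CurlM P x)) := by
  obtain ⟨R, hR⟩ := hΩb.subset_closedBall 0
  refine ⟨min cm (min hm Lm) / (8 + 16 * R ^ 2), by positivity,
    fun u P hu hcu huΩ hP hcP hPΩ => ?_⟩
  have hJ0 : ∀ x ∉ Ω, jac u x = 0 := fun x hx =>
    jac_eq_zero_of_notMem_tsupport fun h => hx (huΩ h)
  have hP0 : ∀ x ∉ Ω, P x = 0 := fun x hx =>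
    image_eq_zero_of_notMem_tsupport fun h => hx (hPΩ h)
  have hCurl0 : ∀ x ∉ Ω, CurlM P x = 0 := fun x hx =>
    CurlM_eq_zero_of_notMem_tsupport fun h => hx (hPΩ h)
  simp (disch := intro x hx; simp [hJ0 x hx, hP0 x hx, hCurl0 x hx, fnormSq, finner]) only
    [setIntegral_eq_integral_of_forall_compl_eq_zero]
  calc _ ≤ min cm (min hm Lm) / (8 + 16 * R ^ 2) * ((8 + 16 * R ^ 2)
          * ((∫ x, fnormSq (symMat (jac u x - P x))) + (∫ x, fnormSq (symMat (P x)))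
            + ∫ x, fnormSq (CurlM P x))) := by
        gcongr
        exact integral_fnormSq_jac_P_CurlM_le hu hcu hP hcP (hPΩ.trans hR)
    _ = min cm (min hm Lm) * ((∫ x, fnormSq (symMat (jac u x - P x)))
          + (∫ x, fnormSq (symMat (P x))) + ∫ x, fnormSq (CurlM P x)) := by
        field_simp
    _ ≤ _ := integral_energyDensity_ge hu hcu hP hcP CC HH LL (fun X hX => (hC X hX).1)
        (fun X hX => (hH X hX).1) (fun X => (hL X).1)

/-- coercivity of the bilinear form of the relaxed micromorphic model. -/
theorem stmt_7 (Ω : Set R3) (hΩo : IsOpen Ω) (hΩb : Bornology.IsBounded Ω)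
    (CC HH LL : M3 →ₗ[ℝ] M3)
    (hCmap : ∀ X : M3, isSymmM X → isSymmM (CC X))
    (hHmap : ∀ X : M3, isSymmM X → isSymmM (HH X))
    (hCsa : ∀ X Y : M3, finner (CC X) Y = finner X (CC Y))
    (hHsa : ∀ X Y : M3, finner (HH X) Y = finner X (HH Y))
    (hLsa : ∀ X Y : M3, finner (LL X) Y = finner X (LL Y))
    (cm cM hm hM Lm LM : ℝ)
    (hcm : 0 < cm) (hcM : 0 < cM) (hhm : 0 < hm) (hhM : 0 < hM) (hLm : 0 < Lm) (hLM : 0 < LM)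
    (hC : ∀ X : M3, isSymmM X →
      cm * fnormSq X ≤ finner (CC X) X ∧ finner (CC X) X ≤ cM * fnormSq X)
    (hH : ∀ X : M3, isSymmM X →
      hm * fnormSq X ≤ finner (HH X) X ∧ finner (HH X) X ≤ hM * fnormSq X)
    (hL : ∀ X : M3, Lm * fnormSq X ≤ finner (LL X) X ∧ finner (LL X) X ≤ LM * fnormSq X) :
    ∃ C : ℝ, 0 < C ∧ ∀ (u : R3 → R3) (P : R3 → M3),
      ContDiff ℝ 1 u → HasCompactSupport u → tsupport u ⊆ Ω →
      ContDiff ℝ 1 P → HasCompactSupport P → tsupport P ⊆ Ω →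
      C * ((∫ x in Ω, fnormSq (jac u x)) + (∫ x in Ω, fnormSq (P x)) +
            ∫ x in Ω, fnormSq (CurlM P x)) ≤
        ∫ x in Ω, (finner (CC (symMat (jac u x - P x))) (symMat (jac u x - P x))
          + finner (HH (symMat (P x))) (symMat (P x))
          + finner (LL (CurlM P x)) (CurlM P x)) :=
  stmt_7_general Ω hΩb CC HH LL cm cM hm hM Lm LM hcm hhm hLm hC hH hL
end
end

section
/- Let α₃ ∈ ℝ and set α₁ = −6α₃ and α₂ = 6α₃. Then for every twice continuously differentiable matrix field P : ℝ³ → ℝ^{3×3} and every x ∈ ℝ³, the matrix Curl( α₁ · dev sym Curl P + α₂ · skew Curl P + α₃ · tr(Curl P) · 𝟙 )(x) is symmetric. -/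
open MeasureTheory

noncomputable section

/-!
With α₁ = −6α₃ and α₂ = 6α₃ the deviatoric-symmetric and skew parts combine, so the moment stress
of X = Curl P is α₃ (3 tr X 𝟙 − 6 Xᵀ). Since Curl P (y) depends linearly on DP(y), the stress is a
fixed linear image Φ(DP(y)), and its Curl at x is a linear expression in D²P(x). Its symmetry is
then a finite identity between the entries of D²P(x) that holds because D²P(x) is a symmetric
bilinear form.
-/

def curlOfDeriv : (R3 →L[ℝ] M3) →ₗ[ℝ] M3 where
  toFun T i := ![T (Pi.single 1 1) i 2 - T (Pi.single 2 1) i 1,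
    T (Pi.single 2 1) i 0 - T (Pi.single 0 1) i 2,
    T (Pi.single 0 1) i 1 - T (Pi.single 1 1) i 0]
  map_add' T S := by
    ext i j
    fin_cases j <;> simp [add_sub_add_comm]
  map_smul' c T := by
    ext i j
    fin_cases j <;> simp [mul_sub]

lemma pd_apply_apply {Q : R3 → M3} {x : R3} (hQ : DifferentiableAt ℝ Q x) (a i j : Fin 3) :
    pd a (fun y => Q y i j) x = fderiv ℝ Q x (Pi.single a 1) i j := by
  let ℓ : M3 →L[ℝ] ℝ := (ContinuousLinearMap.proj (R := ℝ) (φ := fun _ : Fin 3 => ℝ) j).comp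
    (ContinuousLinearMap.proj (R := ℝ) (φ := fun _ : Fin 3 => Fin 3 → ℝ) i)
  exact congrArg (· (Pi.single a 1)) (ℓ.hasFDerivAt.comp x hQ.hasFDerivAt).fderiv

lemma CurlM_eq_curlOfDeriv {Q : R3 → M3} {x : R3} (hQ : DifferentiableAt ℝ Q x) :
    CurlM Q x = curlOfDeriv (fderiv ℝ Q x) := by
  ext i j
  fin_cases j <;> simp [CurlM, curlV, curlOfDeriv, pd_apply_apply hQ]

def momentStress (α : ℝ) : M3 →ₗ[ℝ] M3 where
  toFun X i j := α * (3 * trM X * idM i j - 6 * X j i)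
  map_add' X Y := by
    ext i j
    simp only [trM, Pi.add_apply, Finset.sum_add_distrib]
    ring
  map_smul' c X := by
    ext i j
    simp only [trM, Pi.smul_apply, smul_eq_mul, ← Finset.mul_sum, RingHom.id_apply]
    ring

lemma moment_stress_eq (α : ℝ) (X : M3) :
    (fun i j => (-6 * α) * devv (symMat X) i j + (6 * α) * skeww X i j + α * trM X * idM i j)
      = momentStress α X := by
  ext i j
  simp only [momentStress, devv, symMat, skeww, trM, add_self_div_two, LinearMap.coe_mk,
    AddHom.coe_mk]
  ring

lemma isSymmM_curlOfDeriv_momentStress_comp (α : ℝ) (B : R3 →L[ℝ] R3 →L[ℝ] M3)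
    (hB : ∀ v w, B v w = B w v) :
    isSymmM (curlOfDeriv ((momentStress α ∘ₗ curlOfDeriv).toContinuousLinearMap ∘L B)) := by
  have hB10 := hB (Pi.single 1 1) (Pi.single 0 1)
  have hB20 := hB (Pi.single 2 1) (Pi.single 0 1)
  have hB21 := hB (Pi.single 2 1) (Pi.single 1 1)
  intro i j
  fin_cases i <;> fin_cases j <;>
    simp only [curlOfDeriv, momentStress, trM, idM, Fin.sum_univ_three, hB10, hB20, hB21,
      LinearMap.coe_mk, AddHom.coe_mk, LinearMap.coe_toContinuousLinearMap', LinearMap.coe_comp,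
      ContinuousLinearMap.comp_apply, Function.comp_apply, Fin.isValue, Fin.reduceFinMk,
      Matrix.cons_val, Fin.reduceEq, ↓reduceIte] <;> ring

/-- with α₁ = −6α₃ and α₂ = 6α₃ the Curl of the isotropic moment
stress is symmetric for every C² matrix field P. -/
theorem stmt_19 (α₃ : ℝ) (P : R3 → M3) (hP : ContDiff ℝ 2 P) (x : R3) :
    isSymmM (CurlM (fun y => fun i j =>
      (-6 * α₃) * devv (symMat (CurlM P y)) i j + (6 * α₃) * skeww (CurlM P y) i j
        + α₃ * trM (CurlM P y) * idM i j) x) := by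
  set Φ := (momentStress α₃ ∘ₗ curlOfDeriv).toContinuousLinearMap
  have hfield : (fun y => fun i j =>
      (-6 * α₃) * devv (symMat (CurlM P y)) i j + (6 * α₃) * skeww (CurlM P y) i j
        + α₃ * trM (CurlM P y) * idM i j) = fun y => Φ (fderiv ℝ P y) := by
    funext y
    rw [moment_stress_eq, CurlM_eq_curlOfDeriv (hP.differentiable two_ne_zero y)]
    rfl
  have hDP : Differentiable ℝ (fderiv ℝ P) :=
    (hP.fderiv_right one_add_one_eq_two.le).differentiable one_ne_zero
  have hF : HasFDerivAt (fun y => Φ (fderiv ℝ P y)) (Φ ∘L fderiv ℝ (fderiv ℝ P) x) x :=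
    Φ.hasFDerivAt.comp x (hDP x).hasFDerivAt
  rw [hfield, CurlM_eq_curlOfDeriv hF.differentiableAt, hF.fderiv]
  exact isSymmM_curlOfDeriv_momentStress_comp α₃ _
    (hP.contDiffAt.isSymmSndFDerivAt (by simp))
end
end
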